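/- Let H be a finite dimensional Hopf algebra. The element R_{(α,β),(γ,δ)} = Σᵢ (ε ⋈ β⁻¹(eᵢ)) ⊗ (eⁱ ⋈ 1) satisfies (id ⊗ Δ_{(γ,δ),(μ,ν)})(R_{(α,β),(γ,δ)*(μ,ν)}) = (R_{(α,β),(μ,ν)})₁₃ (R_{(α,β),(γ,δ)})₁₂ as elements of (H* ⋈ H_(α,β)) ⊗ (H* ⋈ H_(γ,δ)) ⊗ (H* ⋈ H_(μ,ν)). -/

import Mathlib

open TensorProduct LinearMap

noncomputable section

namespace DCP

variable (K : Type) {H : Type} [Field K] [Ring H] [HopfAlgebra K H]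

/-- A Hopf algebra automorphism: a linear equivalence that is an algebra morphism and a
coalgebra morphism. -/
def IsHopfAut (f : H ≃ₗ[K] H) : Prop :=
  (∀ x y : H, f (x * y) = f x * f y) ∧ f 1 = 1 ∧
    (Coalgebra.comul ∘ₗ f.toLinearMap
      = TensorProduct.map f.toLinearMap f.toLinearMap ∘ₗ Coalgebra.comul) ∧
    (Coalgebra.counit ∘ₗ f.toLinearMap = (Coalgebra.counit : H →ₗ[K] K))

/-- The convolution product on the dual of `H`, as a bilinear map. -/
def convMul : Module.Dual K H →ₗ[K] Module.Dual K H →ₗ[K] Module.Dual K H :=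
  (TensorProduct.mapBilinear (RingHom.id K) H H K K).compr₂
    ((LinearMap.lcomp K K (Coalgebra.comul (R := K) (A := H))) ∘ₗ
      (LinearMap.llcomp K (H ⊗[K] H) (K ⊗[K] K) K (TensorProduct.lid K K).toLinearMap))

@[simp] lemma convMul_apply (p q : Module.Dual K H) (x : H) :
    convMul K p q x = (TensorProduct.lid K K).toLinearMap
      (TensorProduct.map p q (Coalgebra.comul x)) := rfl

/-- The coproduct on the dual of a finite-dimensional Hopf algebra, dual to multiplication. -/
def dcomul [FiniteDimensional K H] :
    Module.Dual K H →ₗ[K] Module.Dual K H ⊗[K] Module.Dual K H :=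
  (TensorProduct.dualDistribEquiv K H H).symm.toLinearMap ∘ₗ (LinearMap.mul' K H).dualMap

/-- The iterated comultiplication `h ↦ h₁ ⊗ (h₂ ⊗ h₃)`. -/
def comul2 : H →ₗ[K] H ⊗[K] (H ⊗[K] H) :=
  (LinearMap.lTensor H (Coalgebra.comul (R := K))) ∘ₗ Coalgebra.comul

/-- Lift a trilinear map to the triple tensor product `H ⊗ (H ⊗ H)`. -/
def lift3 {W : Type} [AddCommMonoid W] [Module K W]
    (Φ : H →ₗ[K] H →ₗ[K] H →ₗ[K] W) : H ⊗[K] (H ⊗[K] H) →ₗ[K] W :=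
  TensorProduct.lift ((TensorProduct.lift.equiv (RingHom.id K) H H W).toLinearMap ∘ₗ Φ)

variable {K}

/-- auxiliary linear map `h₃ ↦ F (p ∘ mulLeft (u h₃) ∘ mulRight (v h₁)) ⊗ g h₂`. -/
def inner3 (u : H →ₗ[K] H) (F : Module.Dual K H →ₗ[K] Module.Dual K H)
    (p : Module.Dual K H) (a g2 : H) : H →ₗ[K] Module.Dual K H ⊗[K] H :=
  ((TensorProduct.mk K (Module.Dual K H) H).flip g2) ∘ₗ F ∘ₗ
    (LinearMap.llcomp K H H K p) ∘ₗ
    ((LinearMap.llcomp K H H H).flip (LinearMap.mulRight K a)) ∘ₗ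
    ((LinearMap.mul K H) ∘ₗ u)

@[simp] lemma inner3_apply (u : H →ₗ[K] H) (F : Module.Dual K H →ₗ[K] Module.Dual K H)
    (p : Module.Dual K H) (a g2 h₃ : H) :
    inner3 u F p a g2 h₃
      = F (p ∘ₗ LinearMap.mulLeft K (u h₃) ∘ₗ LinearMap.mulRight K a) ⊗ₜ[K] g2 := by
  rfl

variable (K)

/-- The curried trilinear map
`(h₁, h₂, h₃) ↦ F (p ∘ mulLeft (u h₃) ∘ mulRight (v h₁)) ⊗ g h₂`. -/
def coreTri (u v : H →ₗ[K] H) (F : Module.Dual K H →ₗ[K] Module.Dual K H)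
    (g : H →ₗ[K] H) (p : Module.Dual K H) :
    H →ₗ[K] H →ₗ[K] H →ₗ[K] Module.Dual K H ⊗[K] H :=
  LinearMap.mk₂ K (fun h₁ h₂ => inner3 u F p (v h₁) (g h₂))
    (fun m m' n => by
      have hR : ∀ a b : H, LinearMap.mulRight K (a + b)
          = LinearMap.mulRight K a + LinearMap.mulRight K b := by
        intro a b; ext x; simp [mul_add]
      ext h₃
      simp [hR, LinearMap.comp_add, LinearMap.add_comp, map_add, add_tmul])
    (fun c m n => by
      have hR : ∀ a : H, LinearMap.mulRight K ((c : K) • a)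
          = c • LinearMap.mulRight K a := by
        intro a; ext x; simp [mul_smul_comm]
      ext h₃
      simp [hR, LinearMap.comp_smul, LinearMap.smul_comp, map_smul, smul_tmul'])
    (fun m n n' => by
      ext h₃
      simp [map_add, tmul_add])
    (fun c m n => by
      ext h₃
      simp [map_smul, tmul_smul])

/-- The diagonal crossed product of pure tensors:
`(p ⋈ h)(q ⋈ l) = Σ p (α(h₁) ▶ q ◀ S⁻¹β(h₃)) ⋈ h₂ l`. -/
def dprod (α β Sinv : H →ₗ[K] H) (p : Module.Dual K H) (h : H)
    (q : Module.Dual K H) (l : H) : Module.Dual K H ⊗[K] H :=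
  lift3 K (coreTri K (Sinv ∘ₗ β) α (convMul K p) (LinearMap.mulRight K l) q) (comul2 K h)

/-- The value of the antipode of the diagonal crossed product on a pure tensor. -/
def smapVal (α β Sinv : H →ₗ[K] H) (p : Module.Dual K H) (h : H) :
    Module.Dual K H ⊗[K] H :=
  lift3 K (coreTri K (Sinv ∘ₗ β ∘ₗ HopfAlgebra.antipode (R := K))
      (Sinv ∘ₗ α) Sinv.dualMap
      (α ∘ₗ β ∘ₗ HopfAlgebra.antipode (R := K)) p) (comul2 K h)

/-- Componentwise product on a tensor product of two (nonunital) algebras given by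
bilinear multiplications. -/
def tmul₂ {A B : Type} [AddCommMonoid A] [Module K A] [AddCommMonoid B] [Module K B]
    (M1 : A →ₗ[K] A →ₗ[K] A) (M2 : B →ₗ[K] B →ₗ[K] B) :
    A ⊗[K] B →ₗ[K] A ⊗[K] B →ₗ[K] A ⊗[K] B :=
  (TensorProduct.homTensorHomMap (RingHom.id K) A B A B) ∘ₗ (TensorProduct.map M1 M2)

/-- The comultiplication component `Δ_{(α,β),(γ,δ)}(p ⋈ h) = Σ (p₂ ⋈ c h₁) ⊗ (p₁ ⋈ e h₂)`
(with `c = γ`, `e = γ⁻¹βγ`). -/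
def deltaComp [FiniteDimensional K H] (c e : H →ₗ[K] H) :
    Module.Dual K H ⊗[K] H →ₗ[K]
      (Module.Dual K H ⊗[K] H) ⊗[K] (Module.Dual K H ⊗[K] H) :=
  (TensorProduct.tensorTensorTensorComm K (Module.Dual K H) (Module.Dual K H) H H).toLinearMap ∘ₗ
    TensorProduct.map
      ((TensorProduct.comm K (Module.Dual K H) (Module.Dual K H)).toLinearMap ∘ₗ dcomul K)
      (TensorProduct.map c e ∘ₗ Coalgebra.comul)

/-- The crossing map `ξ_(a,b)^(c,·)(p ⋈ h) = (p ∘ b a⁻¹) ⋈ a c⁻¹ b⁻¹ c (h)`. -/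
def xiMap (a b c : H ≃ₗ[K] H) :
    Module.Dual K H ⊗[K] H →ₗ[K] Module.Dual K H ⊗[K] H :=
  TensorProduct.map ((b.toLinearMap ∘ₗ a.symm.toLinearMap).dualMap)
    (a.toLinearMap ∘ₗ c.symm.toLinearMap ∘ₗ b.symm.toLinearMap ∘ₗ c.toLinearMap)

/-- Embedding of the dual into the crossed product, `p ↦ p ⋈ 1`. -/
def toD1 : Module.Dual K H →ₗ[K] Module.Dual K H ⊗[K] H :=
  (TensorProduct.mk K (Module.Dual K H) H).flip 1

/-- Embedding of `H` into the crossed product, `h ↦ ε ⋈ h`. -/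
def toD2 : H →ₗ[K] Module.Dual K H ⊗[K] H :=
  TensorProduct.mk K (Module.Dual K H) H (Coalgebra.counit (R := K))

end DCP

/-! Both sides equal `∑ j k, (ε ⋈ β⁻¹(b j * b k)) ⊗ (b^k ⋈ 1) ⊗ (b^j ⋈ 1)`.
On the left, the coproduct of the dual basis is `Δ(b^i) = ∑ j k, b^i(b j * b k) b^j ⊗ b^k`,
and `∑ i, b^i(x) b i = x` absorbs the first leg. On the right the three products collapse:
`ε` is the unit of the convolution algebra `H*`, and `ε` is invariant under `α`, `β` and `S⁻¹`,
so `(ε ⋈ h)(ε ⋈ l) = ε ⋈ h l` and `(ε ⋈ 1)(q ⋈ 1) = q ⋈ 1 = (q ⋈ 1)(ε ⋈ 1)`; finally `β⁻¹` is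
multiplicative. -/

namespace DCP

open Coalgebra

variable {K H : Type} [Field K] [Ring H] [HopfAlgebra K H]

lemma convMul_counit_left (p : Module.Dual K H) : convMul K counit p = p := by
  ext x
  rw [convMul_apply, ← LinearMap.lTensor_comp_rTensor, LinearMap.comp_apply,
    rTensor_counit_comul]
  simp

lemma convMul_counit_right (p : Module.Dual K H) : convMul K p counit = p := by
  ext x
  rw [convMul_apply, ← LinearMap.rTensor_comp_lTensor, LinearMap.comp_apply,
    lTensor_counit_comul]
  simp

@[simp] lemma lift3_tmul {W : Type} [AddCommMonoid W] [Module K W]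
    (Φ : H →ₗ[K] H →ₗ[K] H →ₗ[K] W) (x y z : H) :
    lift3 K Φ (x ⊗ₜ[K] (y ⊗ₜ[K] z)) = Φ x y z := rfl

@[simp] lemma coreTri_apply (u v : H →ₗ[K] H) (F : Module.Dual K H →ₗ[K] Module.Dual K H)
    (g : H →ₗ[K] H) (p : Module.Dual K H) (h₁ h₂ h₃ : H) :
    coreTri K u v F g p h₁ h₂ h₃
      = F (p ∘ₗ LinearMap.mulLeft K (u h₃) ∘ₗ LinearMap.mulRight K (v h₁)) ⊗ₜ[K] g h₂ := rfl

lemma comul2_one : comul2 K (1 : H) = (1 : H) ⊗ₜ[K] ((1 : H) ⊗ₜ[K] (1 : H)) := by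
  simp [comul2, Bialgebra.comul_one, Algebra.TensorProduct.one_def]

lemma lift3_comul2_of_counit {W : Type} [AddCommMonoid W] [Module K W]
    (Φ : H →ₗ[K] H →ₗ[K] H →ₗ[K] W) (f : H →ₗ[K] W)
    (hΦ : ∀ x y z, Φ x y z = (counit (R := K) x * counit (R := K) z) • f y) (h : H) :
    lift3 K Φ (comul2 K h) = f h := by
  have hcontract : lift3 K Φ = f ∘ₗ (TensorProduct.lid K H).toLinearMap ∘ₗ
      (counit : H →ₗ[K] K).rTensor H ∘ₗ
      ((TensorProduct.rid K H).toLinearMap ∘ₗ (counit : H →ₗ[K] K).lTensor H).lTensor H :=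
    TensorProduct.ext_threefold' fun x y z => by
      simp [hΦ, mul_smul, smul_comm (counit (R := K) x)]
  have hright : (TensorProduct.rid K H).toLinearMap ∘ₗ (counit : H →ₗ[K] K).lTensor H ∘ₗ
      comul = LinearMap.id := by
    ext a; simp [lTensor_counit_comul]
  rw [hcontract, comul2]
  simp only [LinearMap.comp_apply, ← LinearMap.lTensor_comp_apply, ← LinearMap.comp_assoc]
  rw [LinearMap.comp_assoc _ (lTensor H counit), hright]
  simp [rTensor_counit_comul]

lemma map_one_of_comp_antipode_eq_id {Sinv : H →ₗ[K] H}
    (hS : Sinv ∘ₗ HopfAlgebra.antipode K = LinearMap.id) : Sinv 1 = 1 := by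
  simpa [HopfAlgebra.antipode_one] using LinearMap.congr_fun hS 1

lemma counit_comp_of_antipode_comp_eq_id {Sinv : H →ₗ[K] H}
    (hS : HopfAlgebra.antipode K ∘ₗ Sinv = LinearMap.id) :
    counit ∘ₗ Sinv = (counit : H →ₗ[K] K) := by
  ext x
  simpa using congrArg (counit (R := K)) (LinearMap.congr_fun hS x)

namespace IsHopfAut

variable {f : H ≃ₗ[K] H} (hf : IsHopfAut K f)
include hf

lemma map_one : f 1 = 1 := hf.2.1

lemma counit_comp : counit ∘ₗ f.toLinearMap = (counit : H →ₗ[K] K) := hf.2.2.2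

lemma symm_map_one : f.symm 1 = 1 := by
  rw [f.symm_apply_eq, hf.map_one]

lemma symm_mul (x y : H) : f.symm (x * y) = f.symm x * f.symm y := by
  rw [f.symm_apply_eq, hf.1, f.apply_symm_apply, f.apply_symm_apply]

end IsHopfAut

lemma counit_comp_mulLeft_comp_mulRight (a c : H) :
    counit ∘ₗ LinearMap.mulLeft K a ∘ₗ LinearMap.mulRight K c
      = (counit (R := K) a * counit (R := K) c) • (counit : H →ₗ[K] K) := by
  ext x
  simp only [LinearMap.comp_apply, LinearMap.mulLeft_apply, LinearMap.mulRight_apply,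
    LinearMap.smul_apply, smul_eq_mul, Bialgebra.counit_mul]
  ring

lemma dprod_counit_counit {α β Sinv : H →ₗ[K] H} (hα : counit ∘ₗ α = (counit : H →ₗ[K] K))
    (hβ : counit ∘ₗ Sinv ∘ₗ β = (counit : H →ₗ[K] K)) (h l : H) :
    dprod K α β Sinv counit h counit l = (counit : Module.Dual K H) ⊗ₜ[K] (h * l) := by
  refine lift3_comul2_of_counit _ (TensorProduct.mk K _ H counit ∘ₗ LinearMap.mulRight K l)
    (fun x y z => ?_) h
  have hβz : counit ((Sinv ∘ₗ β) z) = counit (R := K) z := LinearMap.congr_fun hβ z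
  have hαx : counit (α x) = counit (R := K) x := LinearMap.congr_fun hα x
  rw [coreTri_apply, counit_comp_mulLeft_comp_mulRight, map_smul, convMul_counit_left, hβz,
    hαx, mul_comm, ← TensorProduct.smul_tmul']
  rfl

lemma dprod_counit_one_one {α β Sinv : H →ₗ[K] H} (hα : α 1 = 1) (hβ : Sinv (β 1) = 1)
    (q : Module.Dual K H) :
    dprod K α β Sinv counit 1 q 1 = q ⊗ₜ[K] (1 : H) := by
  simp [dprod, comul2_one, hα, hβ, convMul_counit_left]

lemma dprod_one_counit_one {α β Sinv : H →ₗ[K] H} (hα : α 1 = 1) (hβ : Sinv (β 1) = 1)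
    (p : Module.Dual K H) :
    dprod K α β Sinv p 1 counit 1 = p ⊗ₜ[K] (1 : H) := by
  simp [dprod, comul2_one, hα, hβ, convMul_counit_right]

lemma tmul₂_tmul {A B : Type} [AddCommMonoid A] [Module K A] [AddCommMonoid B] [Module K B]
    (M₁ : A →ₗ[K] A →ₗ[K] A) (M₂ : B →ₗ[K] B →ₗ[K] B) (x x' : A) (y y' : B) :
    tmul₂ K M₁ M₂ (x ⊗ₜ[K] y) (x' ⊗ₜ[K] y') = M₁ x x' ⊗ₜ[K] M₂ y y' := rfl

section Basis

variable [FiniteDimensional K H] {ι : Type} [Fintype ι] (b : Module.Basis ι K H)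

lemma dcomul_eq_sum (p : Module.Dual K H) :
    dcomul K p = ∑ j, ∑ k, p (b j * b k) • (b.coord j ⊗ₜ[K] b.coord k) := by
  classical
  rw [dcomul, LinearMap.comp_apply, LinearEquiv.coe_coe, LinearEquiv.symm_apply_eq]
  refine TensorProduct.ext (b.ext fun m => b.ext fun n => ?_)
  simp [TensorProduct.dualDistribEquiv, Finsupp.single_apply]

lemma deltaComp_tmul_one {c e : H →ₗ[K] H} (hc : c 1 = 1) (he : e 1 = 1)
    (p : Module.Dual K H) :
    deltaComp K c e (p ⊗ₜ[K] (1 : H))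
      = ∑ j, ∑ k, p (b j * b k) •
          ((b.coord k ⊗ₜ[K] (1 : H)) ⊗ₜ[K] (b.coord j ⊗ₜ[K] (1 : H))) := by
  simp [deltaComp, Bialgebra.comul_one, Algebra.TensorProduct.one_def, hc, he,
    dcomul_eq_sum b, TensorProduct.sum_tmul, TensorProduct.smul_tmul']

lemma lTensor_deltaComp_sum_tmul {M : Type} [AddCommMonoid M] [Module K M] (g : H →ₗ[K] M)
    {c e : H →ₗ[K] H} (hc : c 1 = 1) (he : e 1 = 1) :
    (deltaComp K c e).lTensor M (∑ i, g (b i) ⊗ₜ[K] (b.coord i ⊗ₜ[K] (1 : H)))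
      = ∑ j, ∑ k, g (b j * b k) ⊗ₜ[K]
          ((b.coord k ⊗ₜ[K] (1 : H)) ⊗ₜ[K] (b.coord j ⊗ₜ[K] (1 : H))) := by
  simp only [map_sum, LinearMap.lTensor_tmul, deltaComp_tmul_one b hc he,
    TensorProduct.tmul_sum, TensorProduct.tmul_smul]
  rw [Finset.sum_comm]
  refine Finset.sum_congr rfl fun j _ => ?_
  rw [Finset.sum_comm]
  refine Finset.sum_congr rfl fun k _ => ?_
  simp_rw [TensorProduct.smul_tmul' _ (g _), ← TensorProduct.sum_tmul]
  congr 1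
  simp_rw [← map_smul, ← map_sum, Module.Basis.coord_apply, b.sum_repr]

end Basis

end DCP

theorem stmt15_general (K H : Type) [Field K] [Ring H] [HopfAlgebra K H] [FiniteDimensional K H]
    (Sinv : H →ₗ[K] H)
    (hS1 : Sinv ∘ₗ HopfAlgebra.antipode (R := K) (A := H) = LinearMap.id)
    (hS2 : HopfAlgebra.antipode (R := K) (A := H) ∘ₗ Sinv = LinearMap.id)
    (α β γ δ μ ν : H ≃ₗ[K] H)
    (hα : DCP.IsHopfAut K α)
    (hβ : DCP.IsHopfAut K β)
    (hγ : DCP.IsHopfAut K γ)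
    (hδ : DCP.IsHopfAut K δ)
    (hμ : DCP.IsHopfAut K μ)
    (hν : DCP.IsHopfAut K ν)
    (Ma : Module.Dual K H ⊗[K] H →ₗ[K] Module.Dual K H ⊗[K] H →ₗ[K] Module.Dual K H ⊗[K] H)
    (hMa : ∀ (p : Module.Dual K H) (h : H) (q : Module.Dual K H) (l : H),
      Ma (p ⊗ₜ[K] h) (q ⊗ₜ[K] l) = DCP.dprod K (α.toLinearMap) (β.toLinearMap) Sinv p h q l)
    (Mc : Module.Dual K H ⊗[K] H →ₗ[K] Module.Dual K H ⊗[K] H →ₗ[K] Module.Dual K H ⊗[K] H)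
    (hMc : ∀ (p : Module.Dual K H) (h : H) (q : Module.Dual K H) (l : H),
      Mc (p ⊗ₜ[K] h) (q ⊗ₜ[K] l) = DCP.dprod K (γ.toLinearMap) (δ.toLinearMap) Sinv p h q l)
    (Mm : Module.Dual K H ⊗[K] H →ₗ[K] Module.Dual K H ⊗[K] H →ₗ[K] Module.Dual K H ⊗[K] H)
    (hMm : ∀ (p : Module.Dual K H) (h : H) (q : Module.Dual K H) (l : H),
      Mm (p ⊗ₜ[K] h) (q ⊗ₜ[K] l) = DCP.dprod K (μ.toLinearMap) (ν.toLinearMap) Sinv p h q l)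
    (ι : Type) [Fintype ι] (b : Module.Basis ι K H) :
    LinearMap.lTensor (Module.Dual K H ⊗[K] H)
        (DCP.deltaComp K μ.toLinearMap
          (μ.symm.toLinearMap ∘ₗ δ.toLinearMap ∘ₗ μ.toLinearMap))
        (∑ i, ((Coalgebra.counit : Module.Dual K H) ⊗ₜ[K] β.symm (b i)) ⊗ₜ[K]
          (b.coord i ⊗ₜ[K] (1 : H)))
    = DCP.tmul₂ K Ma (DCP.tmul₂ K Mc Mm)
        (∑ i, ((Coalgebra.counit : Module.Dual K H) ⊗ₜ[K] β.symm (b i)) ⊗ₜ[K]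
          (((Coalgebra.counit : Module.Dual K H) ⊗ₜ[K] (1 : H)) ⊗ₜ[K]
            (b.coord i ⊗ₜ[K] (1 : H))))
        (∑ j, ((Coalgebra.counit : Module.Dual K H) ⊗ₜ[K] β.symm (b j)) ⊗ₜ[K]
          ((b.coord j ⊗ₜ[K] (1 : H)) ⊗ₜ[K]
            ((Coalgebra.counit : Module.Dual K H) ⊗ₜ[K] (1 : H)))) := by
  have hSinv1 := DCP.map_one_of_comp_antipode_eq_id hS1
  have hcounit :
      Coalgebra.counit ∘ₗ Sinv ∘ₗ β.toLinearMap = (Coalgebra.counit : H →ₗ[K] K) := by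
    rw [← LinearMap.comp_assoc, DCP.counit_comp_of_antipode_comp_eq_id hS2, hβ.counit_comp]
  have hconj1 : (μ.symm.toLinearMap ∘ₗ δ.toLinearMap ∘ₗ μ.toLinearMap) 1 = 1 := by
    simp [hμ.map_one, hδ.map_one, hμ.symm_map_one]
  have hLHS := DCP.lTensor_deltaComp_sum_tmul b
    (TensorProduct.mk K _ H (Coalgebra.counit : Module.Dual K H) ∘ₗ β.symm.toLinearMap)
    hμ.map_one hconj1
  simp only [LinearMap.comp_apply, LinearEquiv.coe_coe, TensorProduct.mk_apply] at hLHS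
  rw [hLHS]
  have hMc1 (q : Module.Dual K H) := DCP.dprod_counit_one_one (α := γ.toLinearMap)
    (β := δ.toLinearMap) (Sinv := Sinv) hγ.map_one (by simp [hδ.map_one, hSinv1]) q
  have hMm1 (p : Module.Dual K H) := DCP.dprod_one_counit_one (α := μ.toLinearMap)
    (β := ν.toLinearMap) (Sinv := Sinv) hμ.map_one (by simp [hν.map_one, hSinv1]) p
  simp only [map_sum, LinearMap.sum_apply, DCP.tmul₂_tmul, hMa, hMc, hMm, hMc1, hMm1,
    DCP.dprod_counit_counit hα.counit_comp hcounit, ← hβ.symm_mul]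
  exact Finset.sum_comm

/-- `(id ⊗ Δ_{(γ,δ),(μ,ν)})(R_{(α,β),(γ,δ)*(μ,ν)}) = (R_{(α,β),(μ,ν)})₁₃ (R_{(α,β),(γ,δ)})₁₂`. -/
theorem stmt15 (K H : Type) [Field K] [Ring H] [HopfAlgebra K H] [FiniteDimensional K H]
    (Sinv : H →ₗ[K] H)
    (hS1 : Sinv ∘ₗ HopfAlgebra.antipode (R := K) (A := H) = LinearMap.id)
    (hS2 : HopfAlgebra.antipode (R := K) (A := H) ∘ₗ Sinv = LinearMap.id)
    (α β γ δ μ ν : H ≃ₗ[K] H)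
    (hα : DCP.IsHopfAut K α)
    (hβ : DCP.IsHopfAut K β)
    (hγ : DCP.IsHopfAut K γ)
    (hδ : DCP.IsHopfAut K δ)
    (hμ : DCP.IsHopfAut K μ)
    (hν : DCP.IsHopfAut K ν)
    (Ma : Module.Dual K H ⊗[K] H →ₗ[K] Module.Dual K H ⊗[K] H →ₗ[K] Module.Dual K H ⊗[K] H)
    (hMa : ∀ (p : Module.Dual K H) (h : H) (q : Module.Dual K H) (l : H),
      Ma (p ⊗ₜ[K] h) (q ⊗ₜ[K] l) = DCP.dprod K (α.toLinearMap) (β.toLinearMap) Sinv p h q l)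
    (Mc : Module.Dual K H ⊗[K] H →ₗ[K] Module.Dual K H ⊗[K] H →ₗ[K] Module.Dual K H ⊗[K] H)
    (hMc : ∀ (p : Module.Dual K H) (h : H) (q : Module.Dual K H) (l : H),
      Mc (p ⊗ₜ[K] h) (q ⊗ₜ[K] l) = DCP.dprod K (γ.toLinearMap) (δ.toLinearMap) Sinv p h q l)
    (Mm : Module.Dual K H ⊗[K] H →ₗ[K] Module.Dual K H ⊗[K] H →ₗ[K] Module.Dual K H ⊗[K] H)
    (hMm : ∀ (p : Module.Dual K H) (h : H) (q : Module.Dual K H) (l : H),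
      Mm (p ⊗ₜ[K] h) (q ⊗ₜ[K] l) = DCP.dprod K (μ.toLinearMap) (ν.toLinearMap) Sinv p h q l)
    (ι : Type) [Fintype ι] [DecidableEq ι] (b : Module.Basis ι K H) :
    LinearMap.lTensor (Module.Dual K H ⊗[K] H)
        (DCP.deltaComp K μ.toLinearMap
          (μ.symm.toLinearMap ∘ₗ δ.toLinearMap ∘ₗ μ.toLinearMap))
        (∑ i, ((Coalgebra.counit : Module.Dual K H) ⊗ₜ[K] β.symm (b i)) ⊗ₜ[K]
          (b.coord i ⊗ₜ[K] (1 : H)))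
    = DCP.tmul₂ K Ma (DCP.tmul₂ K Mc Mm)
        (∑ i, ((Coalgebra.counit : Module.Dual K H) ⊗ₜ[K] β.symm (b i)) ⊗ₜ[K]
          (((Coalgebra.counit : Module.Dual K H) ⊗ₜ[K] (1 : H)) ⊗ₜ[K]
            (b.coord i ⊗ₜ[K] (1 : H))))
        (∑ j, ((Coalgebra.counit : Module.Dual K H) ⊗ₜ[K] β.symm (b j)) ⊗ₜ[K]
          ((b.coord j ⊗ₜ[K] (1 : H)) ⊗ₜ[K]
            ((Coalgebra.counit : Module.Dual K H) ⊗ₜ[K] (1 : H)))) :=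
  stmt15_general K H Sinv hS1 hS2 α β γ δ μ ν hα hβ hγ hδ hμ hν Ma hMa Mc hMc Mm hMm ι b
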